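/- arXiv:1110.6600 — 2 statements merged into one kernel-verified Lean document; each statement's English description precedes it below -/
import Mathlib

section
/- Work on M = ℝ² with the L1 metric. Fix λ ∈ (0,1) and α ∈ (0,1/2), let W : M → ℝ be 1-Lipschitz, and suppose t ∈ M dominates s ∈ M with respect to W; set δ = d(s,t). Then for all s_1, s_2, s_3 ∈ M: (a) F_W(s_1,s_2,s) − F_W(s_1,s_2,t) ≥ δ·α(1−λ); (b) F_W(s_1,s,s_3) − F_W(s_1,t,s_3) ≥ δ·((1/2)(1−λ) − α(1+λ)); (c) F_W(s,s_2,s_3) − F_W(t,s_2,s_3) ≥ δ·((1/2)(1−λ) − α(1+λ)); (d) G_W(s_1,s_2,s) − G_W(s_1,s_2,t) ≥ δ·α(1−λ); (e) G_W(s_1,s,s_3) − G_W(s_1,t,s_3) ≥ δ·((1/2)(1−λ) − α(1+λ)); (f) G_W(s,s_2,s_3) − G_W(t,s_2,s_3) ≥ δ·((1/2)(1−λ) − α(1+λ)). -/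
/-!
Write `φₓ u = W u + λ·d(u, x)`, so that `Sl_W(x; C) = inf_C φₓ − W x`. Moving the base point
from `t` to `s` raises `φ` by at most `λδ`, while domination lowers `W` by exactly `δ` from `s`
to `t`; this gives the bounds on the third argument. Since `W` is `1`-Lipschitz, `φₓ` is
`(1 + λ)`-Lipschitz, and every point of `{a, t}` (resp. `Boks a t`) lies within `δ` of
`{a, s}` (resp. `Boks a s`), so the slack changes by at most `(1 + λ)δ` when `s` is replaced
by `t` in the set; domination makes `H_W` drop by at least `(1 − λ)δ/2`.
-/

noncomputable section

/-- The L1 metric on `ℝ²`. -/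
def dL1 (p q : ℝ × ℝ) : ℝ := |p.1 - q.1| + |p.2 - q.2|

/-- The slack of a point `s` to a nonempty set `C` with respect to `W`:
`Sl_W(s;C) = inf_{t ∈ C} (W t + λ·d(t,s)) − W s`. -/
noncomputable def Sl (lam : ℝ) (W : ℝ × ℝ → ℝ) (s : ℝ × ℝ) (C : Set (ℝ × ℝ)) : ℝ :=
  sInf ((fun t => W t + lam * dL1 t s) '' C) - W s

/-- The rectangle spanned by two points of `ℝ²`. -/
def Boks (s1 s2 : ℝ × ℝ) : Set (ℝ × ℝ) :=
  {p | p.1 ∈ Set.uIcc s1.1 s2.1 ∧ p.2 ∈ Set.uIcc s1.2 s2.2}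

/-- `H_W(s₁,s₂) = (1/2)W(s₁) + (1/2)W(s₂) − (λ/2)d(s₁,s₂)`. -/
noncomputable def Hf (lam : ℝ) (W : ℝ × ℝ → ℝ) (s1 s2 : ℝ × ℝ) : ℝ :=
  (1 / 2) * W s1 + (1 / 2) * W s2 - (lam / 2) * dL1 s1 s2

/-- `F_W(s₁,s₂,s₃) = H_W(s₁,s₂) − α·Sl_W(s₃;{s₁,s₂})`. -/
noncomputable def Ff (lam α : ℝ) (W : ℝ × ℝ → ℝ) (s1 s2 s3 : ℝ × ℝ) : ℝ :=
  Hf lam W s1 s2 - α * Sl lam W s3 {s1, s2}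

/-- `G_W(s₁,s₂,s₃) = H_W(s₁,s₂) − α·Sl_W(s₃;Boks(s₁,s₂))`. -/
noncomputable def Gf (lam α : ℝ) (W : ℝ × ℝ → ℝ) (s1 s2 s3 : ℝ × ℝ) : ℝ :=
  Hf lam W s1 s2 - α * Sl lam W s3 (Boks s1 s2)

/-- `t` dominates `s` with respect to `W` if `W s = W t + d(s,t)`. -/
def Dominates (W : ℝ × ℝ → ℝ) (t s : ℝ × ℝ) : Prop :=
  W s = W t + dL1 s t

lemma dL1_nonneg (p q : ℝ × ℝ) : 0 ≤ dL1 p q := by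
  unfold dL1; positivity

lemma dL1_comm (p q : ℝ × ℝ) : dL1 p q = dL1 q p := by
  unfold dL1; rw [abs_sub_comm p.1, abs_sub_comm p.2]

lemma dL1_triangle (p q r : ℝ × ℝ) : dL1 p r ≤ dL1 p q + dL1 q r := by
  unfold dL1
  linarith [abs_sub_le p.1 q.1 r.1, abs_sub_le p.2 q.2 r.2]

lemma left_mem_Boks (a b : ℝ × ℝ) : a ∈ Boks a b :=
  ⟨Set.left_mem_uIcc, Set.left_mem_uIcc⟩

lemma Boks_comm (a b : ℝ × ℝ) : Boks a b = Boks b a := by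
  unfold Boks; rw [Set.uIcc_comm a.1, Set.uIcc_comm a.2]

lemma dL1_le_of_mem_Boks {u a b : ℝ × ℝ} (hu : u ∈ Boks a b) : dL1 u a ≤ dL1 b a := by
  unfold dL1
  linarith [Set.abs_sub_left_of_mem_uIcc hu.1, Set.abs_sub_left_of_mem_uIcc hu.2]

lemma exists_mem_uIcc_abs_sub_le {a b c x : ℝ} (hx : x ∈ Set.uIcc a b) :
    ∃ y ∈ Set.uIcc a c, |y - x| ≤ |b - c| := by
  rcases Set.uIcc_subset_uIcc_union_uIcc hx with hac | hcb
  · exact ⟨x, hac, by simp⟩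
  · exact ⟨c, Set.right_mem_uIcc, by
      rw [abs_sub_comm]; exact Set.abs_sub_left_of_mem_uIcc hcb⟩

lemma exists_mem_Boks_dL1_le {a s t u : ℝ × ℝ} (hu : u ∈ Boks a t) :
    ∃ v ∈ Boks a s, dL1 v u ≤ dL1 s t := by
  obtain ⟨y₁, hy₁, hd₁⟩ := exists_mem_uIcc_abs_sub_le (c := s.1) hu.1
  obtain ⟨y₂, hy₂, hd₂⟩ := exists_mem_uIcc_abs_sub_le (c := s.2) hu.2
  refine ⟨(y₁, y₂), ⟨hy₁, hy₂⟩, ?_⟩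
  rw [dL1_comm s]
  unfold dL1
  exact add_le_add hd₁ hd₂

lemma exists_mem_pair_dL1_le {a s t u : ℝ × ℝ} (hu : u ∈ ({a, t} : Set (ℝ × ℝ))) :
    ∃ v ∈ ({a, s} : Set (ℝ × ℝ)), dL1 v u ≤ dL1 s t := by
  rcases hu with rfl | rfl
  · exact ⟨u, .inl rfl, by simpa [dL1] using dL1_nonneg s t⟩
  · exact ⟨s, .inr rfl, le_rfl⟩

lemma csInf_image_le_csInf_image_add {ι : Type*} {f g : ι → ℝ} {C D : Set ι} {ε : ℝ}
    (hD : D.Nonempty) (hC : BddBelow (f '' C)) (h : ∀ u ∈ D, ∃ v ∈ C, f v ≤ g u + ε) :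
    sInf (f '' C) ≤ sInf (g '' D) + ε := by
  rw [← sub_le_iff_le_add]
  refine le_csInf (hD.image g) ?_
  rintro _ ⟨u, hu, rfl⟩
  obtain ⟨v, hv, hfv⟩ := h u hu
  linarith [csInf_le hC ⟨v, hv, rfl⟩]

section Slack

variable {lam : ℝ} {W : ℝ × ℝ → ℝ}

lemma bddBelow_image_of_dL1_le (hW : ∀ a b : ℝ × ℝ, |W a - W b| ≤ dL1 a b) (hlam : 0 ≤ lam)
    {C : Set (ℝ × ℝ)} {a : ℝ × ℝ} {R : ℝ} (hC : ∀ u ∈ C, dL1 u a ≤ R) (x : ℝ × ℝ) :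
    BddBelow ((fun u => W u + lam * dL1 u x) '' C) := by
  refine ⟨W x - R - dL1 a x, ?_⟩
  rintro _ ⟨u, hu, rfl⟩
  have hWu : W x - W u ≤ dL1 u x := by rw [dL1_comm]; exact (abs_le.mp (hW x u)).2
  linarith [hC u hu, dL1_triangle u a x, mul_nonneg hlam (dL1_nonneg u x)]

lemma bddBelow_image_Boks (hW : ∀ a b : ℝ × ℝ, |W a - W b| ≤ dL1 a b) (hlam : 0 ≤ lam)
    (a b x : ℝ × ℝ) : BddBelow ((fun u => W u + lam * dL1 u x) '' Boks a b) :=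
  bddBelow_image_of_dL1_le hW hlam (fun _ hu => dL1_le_of_mem_Boks hu) x

lemma bddBelow_image_pair (a b : ℝ × ℝ) (f : ℝ × ℝ → ℝ) : BddBelow (f '' {a, b}) :=
  ((Set.toFinite _).image f).bddBelow

lemma add_mul_dL1_le_add_mul_dL1 (hW : ∀ a b : ℝ × ℝ, |W a - W b| ≤ dL1 a b) (hlam : 0 ≤ lam)
    (x u v : ℝ × ℝ) :
    W v + lam * dL1 v x ≤ W u + lam * dL1 u x + (1 + lam) * dL1 v u := by
  have hWv : W v - W u ≤ dL1 v u := (abs_le.mp (hW v u)).2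
  nlinarith [dL1_triangle v u x]

theorem Sl_le_Sl_sub_of_dominates (hlam : 0 ≤ lam) {s t : ℝ × ℝ} (hdom : Dominates W t s)
    {C : Set (ℝ × ℝ)} (hC : C.Nonempty) (hbdd : BddBelow ((fun u => W u + lam * dL1 u s) '' C)) :
    Sl lam W s C ≤ Sl lam W t C - (1 - lam) * dL1 s t := by
  have hinf : sInf ((fun u => W u + lam * dL1 u s) '' C)
      ≤ sInf ((fun u => W u + lam * dL1 u t) '' C) + lam * dL1 s t := by
    refine csInf_image_le_csInf_image_add hC hbdd fun u hu => ⟨u, hu, ?_⟩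
    have := dL1_triangle u t s
    rw [dL1_comm t s] at this
    nlinarith
  unfold Sl
  rw [hdom]
  linarith

theorem Sl_le_Sl_add_of_forall_exists_dL1_le (hW : ∀ a b : ℝ × ℝ, |W a - W b| ≤ dL1 a b)
    (hlam : 0 ≤ lam) {C D : Set (ℝ × ℝ)} {x : ℝ × ℝ} {ε : ℝ} (hD : D.Nonempty)
    (hbdd : BddBelow ((fun u => W u + lam * dL1 u x) '' C))
    (hCD : ∀ u ∈ D, ∃ v ∈ C, dL1 v u ≤ ε) :
    Sl lam W x C ≤ Sl lam W x D + (1 + lam) * ε := by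
  unfold Sl
  suffices sInf ((fun u => W u + lam * dL1 u x) '' C)
      ≤ sInf ((fun u => W u + lam * dL1 u x) '' D) + (1 + lam) * ε by linarith
  refine csInf_image_le_csInf_image_add hD hbdd fun u hu => ?_
  obtain ⟨v, hv, hvu⟩ := hCD u hu
  refine ⟨v, hv, (add_mul_dL1_le_add_mul_dL1 hW hlam x u v).trans ?_⟩
  gcongr

theorem Hf_sub_Hf_of_dominates (hlam : 0 ≤ lam) {s t : ℝ × ℝ} (hdom : Dominates W t s)
    (a : ℝ × ℝ) : dL1 s t * ((1 / 2) * (1 - lam)) ≤ Hf lam W a s - Hf lam W a t := by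
  have := dL1_triangle a t s
  rw [dL1_comm t s] at this
  unfold Hf
  rw [hdom]
  nlinarith

end Slack

section Replacement

variable {lam α : ℝ} {W : ℝ × ℝ → ℝ} {s t : ℝ × ℝ}

lemma Hf_comm (a b : ℝ × ℝ) : Hf lam W a b = Hf lam W b a := by
  unfold Hf; rw [dL1_comm]; ring

lemma Ff_comm (a b c : ℝ × ℝ) : Ff lam α W a b c = Ff lam α W b a c := by
  unfold Ff; rw [Hf_comm, Set.pair_comm]

lemma Gf_comm (a b c : ℝ × ℝ) : Gf lam α W a b c = Gf lam α W b a c := by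
  unfold Gf; rw [Hf_comm, Boks_comm]

theorem Ff_sub_Ff_third (hlam : 0 ≤ lam) (hα : 0 ≤ α) (hdom : Dominates W t s) (a b : ℝ × ℝ) :
    dL1 s t * (α * (1 - lam)) ≤ Ff lam α W a b s - Ff lam α W a b t := by
  have hSl := Sl_le_Sl_sub_of_dominates hlam hdom (Set.insert_nonempty a {b})
    (bddBelow_image_pair a b (fun u => W u + lam * dL1 u s))
  unfold Ff
  nlinarith

theorem Gf_sub_Gf_third (hW : ∀ a b : ℝ × ℝ, |W a - W b| ≤ dL1 a b) (hlam : 0 ≤ lam)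
    (hα : 0 ≤ α) (hdom : Dominates W t s) (a b : ℝ × ℝ) :
    dL1 s t * (α * (1 - lam)) ≤ Gf lam α W a b s - Gf lam α W a b t := by
  have hSl := Sl_le_Sl_sub_of_dominates hlam hdom ⟨a, left_mem_Boks a b⟩
    (bddBelow_image_Boks hW hlam a b s)
  unfold Gf
  nlinarith

theorem Ff_sub_Ff_second (hW : ∀ a b : ℝ × ℝ, |W a - W b| ≤ dL1 a b) (hlam : 0 ≤ lam)
    (hα : 0 ≤ α) (hdom : Dominates W t s) (a c : ℝ × ℝ) :
    dL1 s t * ((1 / 2) * (1 - lam) - α * (1 + lam)) ≤ Ff lam α W a s c - Ff lam α W a t c := by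
  have hSl := Sl_le_Sl_add_of_forall_exists_dL1_le hW hlam (Set.insert_nonempty a {t})
    (bddBelow_image_pair a s (fun u => W u + lam * dL1 u c)) fun _ => exists_mem_pair_dL1_le
  have hH := Hf_sub_Hf_of_dominates hlam hdom a
  unfold Ff
  nlinarith

theorem Gf_sub_Gf_second (hW : ∀ a b : ℝ × ℝ, |W a - W b| ≤ dL1 a b) (hlam : 0 ≤ lam)
    (hα : 0 ≤ α) (hdom : Dominates W t s) (a c : ℝ × ℝ) :
    dL1 s t * ((1 / 2) * (1 - lam) - α * (1 + lam)) ≤ Gf lam α W a s c - Gf lam α W a t c := by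
  have hSl := Sl_le_Sl_add_of_forall_exists_dL1_le hW hlam ⟨a, left_mem_Boks a t⟩
    (bddBelow_image_Boks hW hlam a s c) fun _ => exists_mem_Boks_dL1_le
  have hH := Hf_sub_Hf_of_dominates hlam hdom a
  unfold Gf
  nlinarith

end Replacement

theorem replace_dominated_point_general (lam α : ℝ) (h0 : 0 < lam)
    (hα0 : 0 < α) (W : ℝ × ℝ → ℝ)
    (hW : ∀ a b : ℝ × ℝ, |W a - W b| ≤ dL1 a b)
    (s t : ℝ × ℝ) (hdom : Dominates W t s) (δ : ℝ) (hδ : δ = dL1 s t) :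
    ∀ s1 s2 s3 : ℝ × ℝ,
      Ff lam α W s1 s2 s - Ff lam α W s1 s2 t ≥ δ * (α * (1 - lam)) ∧
      Ff lam α W s1 s s3 - Ff lam α W s1 t s3 ≥
        δ * ((1 / 2) * (1 - lam) - α * (1 + lam)) ∧
      Ff lam α W s s2 s3 - Ff lam α W t s2 s3 ≥
        δ * ((1 / 2) * (1 - lam) - α * (1 + lam)) ∧
      Gf lam α W s1 s2 s - Gf lam α W s1 s2 t ≥ δ * (α * (1 - lam)) ∧
      Gf lam α W s1 s s3 - Gf lam α W s1 t s3 ≥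
        δ * ((1 / 2) * (1 - lam) - α * (1 + lam)) ∧
      Gf lam α W s s2 s3 - Gf lam α W t s2 s3 ≥
        δ * ((1 / 2) * (1 - lam) - α * (1 + lam)) := by
  intro s1 s2 s3
  subst hδ
  refine ⟨Ff_sub_Ff_third h0.le hα0.le hdom s1 s2,
    Ff_sub_Ff_second hW h0.le hα0.le hdom s1 s3, ?_,
    Gf_sub_Gf_third hW h0.le hα0.le hdom s1 s2,
    Gf_sub_Gf_second hW h0.le hα0.le hdom s1 s3, ?_⟩
  · rw [Ff_comm s, Ff_comm t]
    exact Ff_sub_Ff_second hW h0.le hα0.le hdom s2 s3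
  · rw [Gf_comm s, Gf_comm t]
    exact Gf_sub_Gf_second hW h0.le hα0.le hdom s2 s3

/-- If `t` dominates `s` (with `δ = d(s,t)`), replacing `s` by `t` in any argument of `F_W`
or `G_W` decreases the value by the stated amounts. -/
theorem replace_dominated_point (lam α : ℝ) (h0 : 0 < lam) (h1 : lam < 1)
    (hα0 : 0 < α) (hα1 : α < 1 / 2) (W : ℝ × ℝ → ℝ)
    (hW : ∀ a b : ℝ × ℝ, |W a - W b| ≤ dL1 a b)
    (s t : ℝ × ℝ) (hdom : Dominates W t s) (δ : ℝ) (hδ : δ = dL1 s t) :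
    ∀ s1 s2 s3 : ℝ × ℝ,
      Ff lam α W s1 s2 s - Ff lam α W s1 s2 t ≥ δ * (α * (1 - lam)) ∧
      Ff lam α W s1 s s3 - Ff lam α W s1 t s3 ≥
        δ * ((1 / 2) * (1 - lam) - α * (1 + lam)) ∧
      Ff lam α W s s2 s3 - Ff lam α W t s2 s3 ≥
        δ * ((1 / 2) * (1 - lam) - α * (1 + lam)) ∧
      Gf lam α W s1 s2 s - Gf lam α W s1 s2 t ≥ δ * (α * (1 - lam)) ∧
      Gf lam α W s1 s s3 - Gf lam α W s1 t s3 ≥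
        δ * ((1 / 2) * (1 - lam) - α * (1 + lam)) ∧
      Gf lam α W s s2 s3 - Gf lam α W t s2 s3 ≥
        δ * ((1 / 2) * (1 - lam) - α * (1 + lam)) :=
  replace_dominated_point_general lam α h0 hα0 W hW s t hdom δ hδ
end
end

section
/- Fix λ ∈ (0,1), α with 0 < α < (1−λ)/(2(1+λ)), and γ ∈ [0,1], and define Φ_σ = (1−γ)·inf_{M³} F_{W_σ} + γ·inf_{M³} G_{W_σ}. Then: (i) for the empty request sequence ε (whose work function is W_ε(s) = d(O,s)), one has inf_{M³} F_{W_ε} = inf_{M³} G_{W_ε} = 0, and hence Φ_ε = 0; and (ii) for every finite CNN request sequence ρ, inf_{M³} F_{W_ρ} ≤ Opt_ρ and inf_{M³} G_{W_ρ} ≤ Opt_ρ, and hence Φ_ρ ≤ Opt_ρ. -/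
/-!
Every work function `W` dominates the distance from the origin, `d(O, ·) ≤ W`. Hence both
`d(s₁, s₂)` and `Sl_W(s₃; C)` (for `s₁ ∈ C`) are controlled by `W s₁ + W s₂`, resp. `(1 + λ) W s₁`,
and the bound on `α` makes `F_W` and `G_W` nonnegative. On the diagonal `(s, s, s)` both equal
`W s`, so their infima lie between `0` and `Opt`; for the empty sequence `W_ε(O) = 0`.
-/

noncomputable section

/-- The CNN request associated with a point `(x, y)`. -/
def req (p : ℝ × ℝ) : Set (ℝ × ℝ) := {q | q.1 = p.1 ∨ q.2 = p.2}

/-- The work function of a finite CNN request sequence (requests listed in order of arrival),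
starting at origin `O`; for the empty sequence it is `s ↦ d(O,s)`. -/
noncomputable def WF (O : ℝ × ℝ) : List (ℝ × ℝ) → (ℝ × ℝ) → ℝ
  | [], s => dL1 O s
  | p :: l, s => sInf ((fun t => dL1 O t + WF t l s) '' req p)

/-- The optimal (offline) cost of serving the request sequence `σ` from origin `O`. -/
noncomputable def OptC (O : ℝ × ℝ) (σ : List (ℝ × ℝ)) : ℝ := sInf (Set.range (WF O σ))

/-- `inf_{M³} F_W`. -/
noncomputable def infF (lam α : ℝ) (W : ℝ × ℝ → ℝ) : ℝ :=
  sInf (Set.range fun q : (ℝ × ℝ) × (ℝ × ℝ) × (ℝ × ℝ) => Ff lam α W q.1 q.2.1 q.2.2)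

/-- `inf_{M³} G_W`. -/
noncomputable def infG (lam α : ℝ) (W : ℝ × ℝ → ℝ) : ℝ :=
  sInf (Set.range fun q : (ℝ × ℝ) × (ℝ × ℝ) × (ℝ × ℝ) => Gf lam α W q.1 q.2.1 q.2.2)

/-- The potential `Φ = (1−γ)·inf F_W + γ·inf G_W`. -/
noncomputable def Phi (lam α γ : ℝ) (W : ℝ × ℝ → ℝ) : ℝ :=
  (1 - γ) * infF lam α W + γ * infG lam α W

lemma dL1_self (p : ℝ × ℝ) : dL1 p p = 0 := by simp [dL1]

lemma dL1_le_WF (σ : List (ℝ × ℝ)) (O s : ℝ × ℝ) : dL1 O s ≤ WF O σ s := by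
  induction σ generalizing O with
  | nil => exact le_rfl
  | cons p l ih =>
    refine le_csInf ⟨_, p, Or.inl rfl, rfl⟩ ?_
    rintro _ ⟨t, -, rfl⟩
    linarith [dL1_triangle O t s, ih t]

lemma left_mem_Boks_s12 (s₁ s₂ : ℝ × ℝ) : s₁ ∈ Boks s₁ s₂ :=
  ⟨Set.left_mem_uIcc, Set.left_mem_uIcc⟩

lemma right_mem_Boks (s₁ s₂ : ℝ × ℝ) : s₂ ∈ Boks s₁ s₂ :=
  ⟨Set.right_mem_uIcc, Set.right_mem_uIcc⟩

lemma Boks_self (s : ℝ × ℝ) : Boks s s = {s} := by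
  ext p
  simp [Boks, Prod.ext_iff]

section DominatesDist

variable {lam α : ℝ} {O : ℝ × ℝ} {W : ℝ × ℝ → ℝ}

lemma dL1_le_add_of_dominates (hW : ∀ s, dL1 O s ≤ W s) (s t : ℝ × ℝ) :
    dL1 s t ≤ W s + W t := by
  linarith [dL1_triangle s O t, dL1_comm s O, hW s, hW t]

lemma nonneg_of_dominates (hW : ∀ s, dL1 O s ≤ W s) (s : ℝ × ℝ) : 0 ≤ W s :=
  (dL1_nonneg O s).trans (hW s)

lemma Sl_le_of_mem (hW : ∀ s, dL1 O s ≤ W s) (hlam0 : 0 ≤ lam) (hlam1 : lam ≤ 1)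
    {C : Set (ℝ × ℝ)} {s₁ : ℝ × ℝ} (hs₁ : s₁ ∈ C) (s₃ : ℝ × ℝ) :
    Sl lam W s₃ C ≤ (1 + lam) * W s₁ := by
  have hbdd : BddBelow ((fun t => W t + lam * dL1 t s₃) '' C) := by
    refine ⟨0, ?_⟩
    rintro _ ⟨t, -, rfl⟩
    have := nonneg_of_dominates hW t
    have := mul_nonneg hlam0 (dL1_nonneg t s₃)
    positivity
  have hinf := csInf_le hbdd ⟨s₁, hs₁, rfl⟩
  have hd := dL1_le_add_of_dominates hW s₁ s₃
  have hs₃ := nonneg_of_dominates hW s₃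
  unfold Sl
  nlinarith

lemma Hf_sub_Sl_nonneg (hW : ∀ s, dL1 O s ≤ W s) (hlam : 0 ≤ lam) (hα0 : 0 ≤ α)
    (hα : α * (1 + lam) ≤ 1 - lam) {C : Set (ℝ × ℝ)} {s₁ s₂ : ℝ × ℝ} (hs₁ : s₁ ∈ C)
    (hs₂ : s₂ ∈ C) (s₃ : ℝ × ℝ) :
    0 ≤ Hf lam W s₁ s₂ - α * Sl lam W s₃ C := by
  have hlam1 : lam ≤ 1 := by nlinarith
  have hSl₁ := Sl_le_of_mem hW hlam hlam1 hs₁ s₃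
  have hSl₂ := Sl_le_of_mem hW hlam hlam1 hs₂ s₃
  have hd := dL1_le_add_of_dominates hW s₁ s₂
  have hsum := add_nonneg (nonneg_of_dominates hW s₁) (nonneg_of_dominates hW s₂)
  -- `Hf ≥ (1 - λ)/2 · (W s₁ + W s₂)` and `Sl ≤ (1 + λ)/2 · (W s₁ + W s₂)`
  unfold Hf
  nlinarith [mul_le_mul_of_nonneg_left (add_le_add hSl₁ hSl₂) hα0,
    mul_le_mul_of_nonneg_right hα hsum]

lemma Hf_sub_Sl_singleton (s : ℝ × ℝ) : Hf lam W s s - α * Sl lam W s {s} = W s := by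
  simp only [Hf, Sl, Set.image_singleton, csInf_singleton, dL1_self, mul_zero, add_zero, sub_zero,
    sub_self]
  ring

lemma Ff_nonneg (hW : ∀ s, dL1 O s ≤ W s) (hlam : 0 ≤ lam) (hα0 : 0 ≤ α)
    (hα : α * (1 + lam) ≤ 1 - lam) (s₁ s₂ s₃ : ℝ × ℝ) : 0 ≤ Ff lam α W s₁ s₂ s₃ :=
  Hf_sub_Sl_nonneg hW hlam hα0 hα (by simp) (by simp) s₃

lemma Gf_nonneg (hW : ∀ s, dL1 O s ≤ W s) (hlam : 0 ≤ lam) (hα0 : 0 ≤ α)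
    (hα : α * (1 + lam) ≤ 1 - lam) (s₁ s₂ s₃ : ℝ × ℝ) : 0 ≤ Gf lam α W s₁ s₂ s₃ :=
  Hf_sub_Sl_nonneg hW hlam hα0 hα (left_mem_Boks_s12 s₁ s₂) (right_mem_Boks s₁ s₂) s₃

lemma infF_nonneg (hW : ∀ s, dL1 O s ≤ W s) (hlam : 0 ≤ lam) (hα0 : 0 ≤ α)
    (hα : α * (1 + lam) ≤ 1 - lam) : 0 ≤ infF lam α W :=
  Real.iInf_nonneg fun q => Ff_nonneg hW hlam hα0 hα q.1 q.2.1 q.2.2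

lemma infG_nonneg (hW : ∀ s, dL1 O s ≤ W s) (hlam : 0 ≤ lam) (hα0 : 0 ≤ α)
    (hα : α * (1 + lam) ≤ 1 - lam) : 0 ≤ infG lam α W :=
  Real.iInf_nonneg fun q => Gf_nonneg hW hlam hα0 hα q.1 q.2.1 q.2.2

lemma infF_le (hW : ∀ s, dL1 O s ≤ W s) (hlam : 0 ≤ lam) (hα0 : 0 ≤ α)
    (hα : α * (1 + lam) ≤ 1 - lam) (s : ℝ × ℝ) : infF lam α W ≤ W s := by
  have hbdd : BddBelow (Set.range fun q : (ℝ × ℝ) × (ℝ × ℝ) × (ℝ × ℝ) =>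
      Ff lam α W q.1 q.2.1 q.2.2) :=
    ⟨0, Set.forall_mem_range.2 fun q => Ff_nonneg hW hlam hα0 hα q.1 q.2.1 q.2.2⟩
  refine (csInf_le hbdd ⟨(s, s, s), rfl⟩).trans_eq ?_
  simpa [Ff] using Hf_sub_Sl_singleton s

lemma infG_le (hW : ∀ s, dL1 O s ≤ W s) (hlam : 0 ≤ lam) (hα0 : 0 ≤ α)
    (hα : α * (1 + lam) ≤ 1 - lam) (s : ℝ × ℝ) : infG lam α W ≤ W s := by
  have hbdd : BddBelow (Set.range fun q : (ℝ × ℝ) × (ℝ × ℝ) × (ℝ × ℝ) =>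
      Gf lam α W q.1 q.2.1 q.2.2) :=
    ⟨0, Set.forall_mem_range.2 fun q => Gf_nonneg hW hlam hα0 hα q.1 q.2.1 q.2.2⟩
  refine (csInf_le hbdd ⟨(s, s, s), rfl⟩).trans_eq ?_
  simpa [Gf, Boks_self] using Hf_sub_Sl_singleton s

end DominatesDist

lemma Phi_le {lam α γ c : ℝ} {W : ℝ × ℝ → ℝ} (hγ0 : 0 ≤ γ) (hγ1 : γ ≤ 1)
    (hF : infF lam α W ≤ c) (hG : infG lam α W ≤ c) : Phi lam α γ W ≤ c := by
  unfold Phi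
  nlinarith

theorem potential_zero_and_le_opt_general (lam α γ : ℝ) (h0 : 0 < lam)
    (hα0 : 0 < α) (hα1 : α < (1 - lam) / (2 * (1 + lam))) (hγ0 : 0 ≤ γ) (hγ1 : γ ≤ 1)
    (O : ℝ × ℝ) :
    (infF lam α (WF O []) = 0 ∧ infG lam α (WF O []) = 0 ∧ Phi lam α γ (WF O []) = 0) ∧
      ∀ ρ : List (ℝ × ℝ),
        infF lam α (WF O ρ) ≤ OptC O ρ ∧ infG lam α (WF O ρ) ≤ OptC O ρ ∧
          Phi lam α γ (WF O ρ) ≤ OptC O ρ := by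
  have hα : α * (1 + lam) ≤ 1 - lam := by
    have := (lt_div_iff₀ (by linarith : (0 : ℝ) < 2 * (1 + lam))).1 hα1
    nlinarith
  have hW (ρ : List (ℝ × ℝ)) := dL1_le_WF ρ O
  have hWO : WF O [] O = 0 := dL1_self O
  have hF : infF lam α (WF O []) = 0 :=
    le_antisymm (hWO ▸ infF_le (hW []) h0.le hα0.le hα O) (infF_nonneg (hW []) h0.le hα0.le hα)
  have hG : infG lam α (WF O []) = 0 :=
    le_antisymm (hWO ▸ infG_le (hW []) h0.le hα0.le hα O) (infG_nonneg (hW []) h0.le hα0.le hα)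
  refine ⟨⟨hF, hG, by simp [Phi, hF, hG]⟩, fun ρ => ?_⟩
  have hFρ : infF lam α (WF O ρ) ≤ OptC O ρ := le_ciInf (infF_le (hW ρ) h0.le hα0.le hα)
  have hGρ : infG lam α (WF O ρ) ≤ OptC O ρ := le_ciInf (infG_le (hW ρ) h0.le hα0.le hα)
  exact ⟨hFρ, hGρ, Phi_le hγ0 hγ1 hFρ hGρ⟩

/-- (i) For the empty request sequence the potential (and both its parts) is zero;
(ii) for every request sequence `ρ` the potential (and both its parts) is at most `Opt_ρ`. -/
theorem potential_zero_and_le_opt (lam α γ : ℝ) (h0 : 0 < lam) (h1 : lam < 1)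
    (hα0 : 0 < α) (hα1 : α < (1 - lam) / (2 * (1 + lam))) (hγ0 : 0 ≤ γ) (hγ1 : γ ≤ 1)
    (O : ℝ × ℝ) :
    (infF lam α (WF O []) = 0 ∧ infG lam α (WF O []) = 0 ∧ Phi lam α γ (WF O []) = 0) ∧
      ∀ ρ : List (ℝ × ℝ),
        infF lam α (WF O ρ) ≤ OptC O ρ ∧ infG lam α (WF O ρ) ≤ OptC O ρ ∧
          Phi lam α γ (WF O ρ) ≤ OptC O ρ :=
  potential_zero_and_le_opt_general lam α γ h0 hα0 hα1 hγ0 hγ1 O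
end
end
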